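/- arXiv:2411.14562 — 3 statements merged into one kernel-verified Lean document; each statement's English description precedes it below -/
import Mathlib

section
/- Let k ≥ 2 and let e_1, …, e_n be integers with 2 ≤ e_i ≤ k for all i and ∑_{i=1}^n (e_i − 1) = 2(k − 1). Then there exist cyclic permutations σ_1, …, σ_n in the symmetric group on {1, …, k} such that (i) σ_i is a cycle of length e_i for each i, (ii) σ_1 σ_2 ⋯ σ_n is the identity, (iii) the subgroup generated by σ_1, …, σ_n acts transitively on {1, …, k}, and (iv) for each i ∈ {1, …, n−1}, the supports of σ_i and σ_{i+1} intersect. -/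
/-!
All the cycles pass through one base point `x`, which makes transitivity and the intersection
condition immediate. The partial products `σ₁ ⋯ σⱼ` are kept equal to a single cycle through `x`:
by the identity `(x R B) (x V R̄) = (x V B)`, with `R̄` the segment `R` reversed, a new cycle
through `x` can bring in fresh points `V` and absorb a segment `R` of the running cycle. Using
as many fresh points as possible at each step, the running cycle first grows until all `k` points
have appeared; from then on the remaining `eᵢ - 1` sum to its length minus one, so it shrinks back
to the identity.
-/

open List

namespace List

variable {α : Type*} [DecidableEq α]

theorem formPerm_append_cons : ∀ (l : List α) (x : α) (r : List α),
    formPerm (l ++ x :: r) = formPerm (l ++ [x]) * formPerm (x :: r)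
  | [], _, _ => by simp
  | [_], _, _ => rfl
  | _ :: b :: l, x, r => by simpa [mul_assoc] using formPerm_append_cons (b :: l) x r

theorem formPerm_cons_append {x : α} {l r : List α} (h : (x :: (l ++ r)).Nodup) :
    formPerm (x :: (l ++ r)) = formPerm (x :: r) * formPerm (x :: l) := by
  have hr : (x :: r).Nodup := h.sublist (by simp)
  rw [← formPerm_rotate _ h (x :: l).length, ← cons_append, rotate_append_length_eq,
    formPerm_append_cons, ← formPerm_rotate _ hr 1]
  simp

theorem formPerm_cons_reverse {x : α} {l : List α} (h : (x :: l).Nodup) :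
    formPerm (x :: l.reverse) = (formPerm (x :: l))⁻¹ := by
  rw [← formPerm_reverse, ← formPerm_rotate _ (by simpa using h) 1]
  simp

theorem formPerm_cons_append_mul_formPerm_cons_append_reverse {x : α} {R B V : List α}
    (h : (x :: (R ++ B ++ V)).Nodup) :
    formPerm (x :: (R ++ B)) * formPerm (x :: (V ++ R.reverse)) = formPerm (x :: (V ++ B)) := by
  rw [formPerm_cons_append (h.sublist (by simp)), formPerm_cons_append (by grind),
    formPerm_cons_reverse (h.sublist (by simp)), formPerm_cons_append (by grind)]
  group

theorem exists_formPerm_cons_mul_prod_eq_one (x : α) : ∀ (s : List ℕ) (C F : List α),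
    (x :: (C ++ F)).Nodup → (∀ m ∈ s, m ≤ F.length + C.length) →
    s.sum = 2 * F.length + C.length →
    ∃ W : List (List α), W.map length = s.map (· + 1) ∧ (∀ w ∈ W, w.Nodup ∧ x ∈ w) ∧
      formPerm (x :: C) * (W.map formPerm).prod = 1 ∧ ∀ a ∈ C ++ F, ∃ w ∈ W, a ∈ w
  | [], C, F, _, _, hsum => by
    obtain ⟨rfl, rfl⟩ : C = [] ∧ F = [] := by
      rw [← length_eq_zero_iff, ← length_eq_zero_iff]; simp at hsum; omega
    simp
  | m :: s, C, F, hnd, hle, hsum => by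
    have hm := hle m mem_cons_self
    -- use `min m |F|` fresh points `V` and absorb the remaining ones as the segment `R` of `C`
    obtain ⟨V, F', rfl, hV⟩ : ∃ V F', F = V ++ F' ∧ V.length = min m F.length :=
      ⟨F.take (min m F.length), F.drop (min m F.length), (take_append_drop _ _).symm, by simp⟩
    obtain ⟨R, B, rfl, hR⟩ : ∃ R B, C = R ++ B ∧ R.length = m - V.length :=
      ⟨C.take (m - V.length), C.drop (m - V.length), (take_append_drop _ _).symm,
        length_take_of_le (by simp only [length_append] at hm hV; omega)⟩
    simp only [length_append, sum_cons] at hm hV hR hsum hle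
    have hs : s.sum = 2 * F'.length + (V ++ B).length := by rw [length_append]; omega
    -- if `R` is nonempty the fresh points are used up, and then `m' ≤ s.sum = |V ++ B|`
    have hs_le : ∀ m' ∈ s, m' ≤ F'.length + (V ++ B).length := by
      intro m' hm'
      have := hle m' (mem_cons_of_mem m hm')
      have := le_sum_of_mem hm'
      rw [length_append]; omega
    obtain ⟨W, hlen, hW, hprod, hcover⟩ :=
      exists_formPerm_cons_mul_prod_eq_one x s (V ++ B) F' (by grind) hs_le hs
    refine ⟨(x :: (V ++ R.reverse)) :: W, ?_, forall_mem_cons.2 ⟨⟨by grind, mem_cons_self⟩, hW⟩,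
      ?_, fun a ha => ?_⟩
    · simp only [map_cons, hlen, length_cons, length_append, length_reverse]
      congr 1
      omega
    · rw [map_cons, prod_cons, ← mul_assoc,
        formPerm_cons_append_mul_formPerm_cons_append_reverse (by grind), hprod]
    · by_cases haW : a ∈ R ∨ a ∈ V
      · exact exists_mem_cons_of W (by simp only [mem_cons, mem_append, mem_reverse]; tauto)
      · exact exists_mem_cons_of_exists (hcover a (by simp only [mem_append] at ha ⊢; tauto))

end List

theorem exists_isCycle_list_prod_eq_one {α : Type*} [DecidableEq α] [Fintype α] (x : α)
    (s : List ℕ) (hs : ∀ m ∈ s, 1 ≤ m ∧ m ≤ Fintype.card α - 1)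
    (hsum : s.sum = 2 * (Fintype.card α - 1)) :
    ∃ l : List (Equiv.Perm α), l.map (fun σ => σ.support.card) = s.map (· + 1) ∧ l.prod = 1 ∧
      (∀ σ ∈ l, σ.IsCycle ∧ x ∈ σ.support) ∧
      ∀ a b : α, ∃ g ∈ Subgroup.closure {σ | σ ∈ l}, g a = b := by
  set F := (Finset.univ.erase x).toList
  have hF : F.length = Fintype.card α - 1 := by simp [F, Finset.card_erase_of_mem]
  obtain ⟨W, hlen, hW, hprod, hcover⟩ := exists_formPerm_cons_mul_prod_eq_one x s [] F
    (by simp [F, Finset.nodup_toList]) (by simpa [hF] using fun m hm => (hs m hm).2)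
    (by simp [hF, hsum])
  have hlong : ∀ w ∈ W, 2 ≤ w.length := by
    intro w hw
    obtain ⟨m, hm, hwm⟩ := mem_map.1 (hlen ▸ mem_map_of_mem (f := length) hw)
    linarith [(hs m hm).1]
  have hsupp : ∀ w ∈ W, (formPerm w).support = w.toFinset := fun w hw =>
    support_formPerm_of_nodup w (hW w hw).1 (by rintro y rfl; simpa using hlong _ hw)
  have hcyc : ∀ w ∈ W, (formPerm w).IsCycle ∧ x ∈ (formPerm w).support := fun w hw =>
    ⟨isCycle_formPerm (hW w hw).1 (hlong w hw), by simpa [hsupp w hw] using (hW w hw).2⟩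
  have hreach : ∀ a, ∃ g ∈ Subgroup.closure {σ | σ ∈ W.map formPerm}, g a = x := by
    intro a
    by_cases hax : a = x
    · exact ⟨1, Subgroup.one_mem _, hax⟩
    obtain ⟨w, hw, haw⟩ := hcover a (by simp [F, hax])
    obtain ⟨z, hz⟩ := (hcyc w hw).1.sameCycle
      (Equiv.Perm.mem_support.1 (by simpa [hsupp w hw] using haw))
      (Equiv.Perm.mem_support.1 (hcyc w hw).2)
    have hwH : w.formPerm ∈ Subgroup.closure {σ | σ ∈ W.map formPerm} :=
      Subgroup.subset_closure (mem_map_of_mem hw)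
    exact ⟨w.formPerm ^ z, zpow_mem hwH z, hz⟩
  refine ⟨W.map formPerm, ?_, by simpa using hprod, by simpa using hcyc, fun a b => ?_⟩
  · rw [map_map, ← hlen]
    exact map_congr_left fun w hw => by simp [hsupp w hw, toFinset_card_of_nodup (hW w hw).1]
  · obtain ⟨ga, hga, hgax⟩ := hreach a
    obtain ⟨gb, hgb, hgbx⟩ := hreach b
    exact ⟨gb⁻¹ * ga, mul_mem (inv_mem hgb) hga, by simp [hgax, ← hgbx]⟩

/-- Existence of cycles `σ₁, …, σₙ` in `Sym(k)` of prescribed lengths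
`e₁, …, eₙ` (with `2 ≤ eᵢ ≤ k` and `∑ (eᵢ - 1) = 2(k-1)`), whose product is the
identity, generating a transitive subgroup, and with consecutive supports
intersecting. -/
theorem stmt0 (k n : ℕ) (hk : 2 ≤ k) (e : Fin n → ℕ)
    (he : ∀ i, 2 ≤ e i ∧ e i ≤ k)
    (hsum : ∑ i, (e i - 1) = 2 * (k - 1)) :
    ∃ σ : Fin n → Equiv.Perm (Fin k),
      (∀ i, (σ i).IsCycle ∧ (σ i).support.card = e i) ∧
      (List.ofFn σ).prod = 1 ∧
      (∀ a b : Fin k, ∃ g ∈ Subgroup.closure (Set.range σ), g a = b) ∧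
      (∀ (i : ℕ) (h : i + 1 < n),
        ((σ ⟨i, by omega⟩).support ∩ (σ ⟨i + 1, h⟩).support).Nonempty) := by
  have hs : ∀ m ∈ List.ofFn fun i => e i - 1, 1 ≤ m ∧ m ≤ Fintype.card (Fin k) - 1 := by
    simp only [mem_ofFn, forall_exists_index, forall_apply_eq_imp_iff, Fintype.card_fin]
    exact fun i => by have := he i; omega
  obtain ⟨l, hcard, hprod, hcyc, htrans⟩ :=
    exists_isCycle_list_prod_eq_one (⟨0, by omega⟩ : Fin k) _ hs (by simpa [sum_ofFn] using hsum)
  obtain rfl : l.length = n := by simpa using congrArg length hcard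
  refine ⟨l.get, fun i => ⟨(hcyc _ (get_mem l i)).1, ?_⟩, by rwa [ofFn_get],
    by rwa [Set.range_list_get],
    fun i h => ⟨_, Finset.mem_inter.2 ⟨(hcyc _ (get_mem l _)).2, (hcyc _ (get_mem l _)).2⟩⟩⟩
  have hi := getElem_of_eq hcard (i := i) (by simp)
  simp only [getElem_map, List.getElem_ofFn, Fin.eta] at hi
  rw [get_eq_getElem]
  have := (he i).1
  omega
end

section
/- Let p > δ ≥ 0 and k ≥ 2 be integers, set g = p − δ and α = ⌊g/(2(k−1))⌋, and assume δ ≥ α(g − (k−1)(α+1)). Then there exist nonnegative integers α_1, …, α_p such that ∑_{j=1}^p j·α_j = p, ∑_{j=1}^p α_j = g, and α_j ≤ 2(k−1) for every j. -/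
/-!
Place `g - 1` of the `g` parts as low as possible, `m = 2(k - 1)` in each of the slots
`1, …, q` and the rest in slot `q + 1`, and put the last part in the slot `N` that makes the
weighted sum equal to `p`. This respects the cap as soon as `N > q`, i.e. as soon as `p` is at
least the weighted sum of the lowest packing of all `g` parts. Writing `g = mα + r`, that sum is
`(α + 1)((k - 1)α + r) = g + α(g - (k - 1)(α + 1))`, so the condition is the hypothesis on `δ`.
-/

open Finset

def lowestPacking (m n j : ℕ) : ℕ :=
  if j ≤ n / m then m else if j = n / m + 1 then n % m else 0

def packingWeight (m n : ℕ) : ℕ :=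
  m * ∑ j ∈ Icc 1 (n / m), j + n % m * (n / m + 1)

section
variable {m : ℕ}

lemma lowestPacking_le (hm : 0 < m) (n j : ℕ) : lowestPacking m n j ≤ m := by
  have := Nat.mod_lt n hm
  unfold lowestPacking
  split_ifs <;> omega

lemma lowestPacking_lt_of_div_lt (hm : 0 < m) {n j : ℕ} (hj : n / m < j) :
    lowestPacking m n j < m := by
  have := Nat.mod_lt n hm
  unfold lowestPacking
  split_ifs <;> omega

lemma sum_mul_lowestPacking (f : ℕ → ℕ) {n p : ℕ} (hp : n / m + 1 ≤ p) :
    ∑ j ∈ Icc 1 p, f j * lowestPacking m n j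
      = m * ∑ j ∈ Icc 1 (n / m), f j + n % m * f (n / m + 1) := by
  have hvanish : ∀ j ∈ Icc 1 p, j ∉ Icc 1 (n / m + 1) → f j * lowestPacking m n j = 0 := by
    intro j hj hj'
    simp only [mem_Icc] at hj hj'
    simp only [lowestPacking, if_neg (show ¬ j ≤ n / m by omega),
      if_neg (show j ≠ n / m + 1 by omega), mul_zero]
  have hfull : ∀ j ∈ Icc 1 (n / m), f j * lowestPacking m n j = m * f j := by
    intro j hj
    simp only [mem_Icc] at hj
    simp only [lowestPacking, if_pos hj.2, mul_comm]
  rw [← sum_subset (Icc_subset_Icc_right hp) hvanish, sum_Icc_succ_top (Nat.le_add_left 1 _),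
    sum_congr rfl hfull, ← mul_sum, lowestPacking, if_neg (by omega), if_pos rfl, mul_comm (f _)]

lemma sum_lowestPacking {n p : ℕ} (hp : n / m + 1 ≤ p) :
    ∑ j ∈ Icc 1 p, lowestPacking m n j = n := by
  simpa [Nat.div_add_mod] using sum_mul_lowestPacking (m := m) (fun _ ↦ 1) hp

lemma sum_id_mul_lowestPacking {n p : ℕ} (hp : n / m + 1 ≤ p) :
    ∑ j ∈ Icc 1 p, j * lowestPacking m n j = packingWeight m n :=
  sum_mul_lowestPacking id hp

lemma packingWeight_succ (hm : 0 < m) (n : ℕ) :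
    packingWeight m (n + 1) = packingWeight m n + (n / m + 1) := by
  unfold packingWeight
  have hn := Nat.div_add_mod n m
  have hc := Nat.mod_lt n hm
  set q := n / m
  set c := n % m
  rcases (show c + 1 < m ∨ c + 1 = m by omega) with hlt | heq
  · have hq : (n + 1) / m = q := Nat.div_eq_of_lt_le (by nlinarith) (by nlinarith)
    have hr : (n + 1) % m = c + 1 := by
      have := Nat.div_add_mod (n + 1) m
      rw [hq] at this; omega
    rw [hq, hr]; ring
  · have hq : (n + 1) / m = q + 1 := Nat.div_eq_of_lt_le (by nlinarith) (by nlinarith)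
    have hr : (n + 1) % m = 0 := by
      have := Nat.div_add_mod (n + 1) m
      rw [hq] at this; nlinarith
    rw [hq, hr, sum_Icc_succ_top (Nat.le_add_left 1 _), ← heq]
    ring
end

lemma two_mul_sum_Icc_id (q : ℕ) : 2 * ∑ j ∈ Icc 1 q, j = q * (q + 1) := by
  induction q with
  | zero => simp
  | succ q ih => rw [sum_Icc_succ_top (Nat.le_add_left 1 _), mul_add, ih]; ring

theorem exists_capped_partition {m g p : ℕ} (hm : 0 < m) (hg : 0 < g)
    (hp : packingWeight m g ≤ p) :
    ∃ a : ℕ → ℕ, ∑ j ∈ Icc 1 p, j * a j = p ∧ ∑ j ∈ Icc 1 p, a j = g ∧ ∀ j, a j ≤ m := by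
  obtain ⟨n, rfl⟩ : ∃ n, g = n + 1 := ⟨g - 1, by omega⟩
  rw [packingWeight_succ hm] at hp
  set N := p - packingWeight m n
  -- `omega` reads `n / m` as an integer quotient and needs to be told it is nonnegative
  have := Nat.zero_le (n / m)
  have hN : n / m < N ∧ N ≤ p := by omega
  have hNmem : N ∈ Icc 1 p := mem_Icc.2 ⟨by omega, hN.2⟩
  have hfits : n / m + 1 ≤ p := hN.1.trans_le hN.2
  refine ⟨fun j ↦ lowestPacking m n j + if j = N then 1 else 0, ?_, ?_, fun j ↦ ?_⟩
  · simp only [mul_add, mul_ite, mul_one, mul_zero, sum_add_distrib, sum_ite_eq', if_pos hNmem,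
      sum_id_mul_lowestPacking hfits]
    omega
  · simp only [sum_add_distrib, sum_ite_eq', if_pos hNmem, sum_lowestPacking hfits]
  · dsimp only
    split_ifs with hj
    · exact hj ▸ lowestPacking_lt_of_div_lt hm hN.1
    · exact lowestPacking_le hm n j

/-- Under the Severi variety nonemptiness criterion, there exist
nonnegative integers `α₁, …, α_p` with `∑ j αⱼ = p`, `∑ αⱼ = g` and each
`αⱼ ≤ 2(k-1)`. -/
theorem stmt11 (p δ k : ℕ) (hδ : δ < p) (hk : 2 ≤ k)
    (g α : ℕ) (hg : g = p - δ) (hα : α = g / (2 * (k - 1)))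
    (hcond : (δ : ℤ) ≥ (α : ℤ) * ((g : ℤ) - ((k : ℤ) - 1) * (α + 1))) :
    ∃ a : ℕ → ℕ,
      (∑ j ∈ Finset.Icc 1 p, j * a j) = p ∧
      (∑ j ∈ Finset.Icc 1 p, a j) = g ∧
      (∀ j, a j ≤ 2 * (k - 1)) := by
  refine exists_capped_partition (by omega) (by omega) ?_
  have hgauss := two_mul_sum_Icc_id α
  have hdiv := Nat.div_add_mod g (2 * (k - 1))
  rw [packingWeight, ← hα]
  rw [← hα] at hdiv
  obtain rfl : p = g + δ := by omega
  generalize g % (2 * (k - 1)) = r at hdiv ⊢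
  zify [show 1 ≤ k by omega] at hgauss hdiv ⊢
  linear_combination hcond + ((k : ℤ) - 1) * hgauss + ((α : ℤ) + 1) * hdiv
end

section
/- Let G be a finite group acting transitively on a set X with at least 2 elements, and let σ_1, …, σ_n be generators of G with σ_1 ⋯ σ_n = id. If every σ_i is a transposition (a cycle of length 2), then n is even and n ≥ 2(|X| − 1). -/
/-!
Multiplying a permutation by a transposition `(a b)` changes its number of cycles by at most one,
and decreases it when `a` and `b` lie in different cycles. Build the product `σ₁ ⋯ σₙ = 1` from the
right: the number of cycles starts and ends at `|X|`. Whenever `σᵢ` joins two orbits of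
`⟨σᵢ₊₁, …, σₙ⟩` it merges two cycles, and since the final group is transitive this happens at least
`|X| - 1` times; every merge must be undone by a split, so `n ≥ 2(|X| - 1)`. Parity is the sign.
-/

open Equiv Equiv.Perm MulAction Subgroup

namespace TranspositionFactorization

variable {α : Type*}

section Setoid

/-- The smallest equivalence relation containing `r` and relating `a` to `b`. -/
def glue (r : Setoid α) (a b : α) : Setoid α where
  r x y := r x y ∨ (r x a ∧ r b y) ∨ (r x b ∧ r a y)
  iseqv := by
    refine ⟨fun x => Or.inl (r.refl x), ?_, ?_⟩
    · rintro x y (h | ⟨h₁, h₂⟩ | ⟨h₁, h₂⟩)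
      · exact Or.inl (r.symm h)
      · exact Or.inr (Or.inr ⟨r.symm h₂, r.symm h₁⟩)
      · exact Or.inr (Or.inl ⟨r.symm h₂, r.symm h₁⟩)
    · rintro x y z (h | ⟨h₁, h₂⟩ | ⟨h₁, h₂⟩) (h' | ⟨h₁', h₂'⟩ | ⟨h₁', h₂'⟩)
      · exact Or.inl (r.trans h h')
      · exact Or.inr (Or.inl ⟨r.trans h h₁', h₂'⟩)
      · exact Or.inr (Or.inr ⟨r.trans h h₁', h₂'⟩)
      · exact Or.inr (Or.inl ⟨h₁, r.trans h₂ h'⟩)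
      · exact Or.inl (r.trans h₁ (r.trans (r.symm h₁') (r.trans (r.symm h₂) h₂')))
      · exact Or.inl (r.trans h₁ h₂')
      · exact Or.inr (Or.inr ⟨h₁, r.trans h₂ h'⟩)
      · exact Or.inl (r.trans h₁ h₂')
      · exact Or.inl (r.trans h₁ (r.trans (r.symm h₁') (r.trans (r.symm h₂) h₂')))

lemma le_glue (r : Setoid α) (a b : α) : r ≤ glue r a b := fun _ _ h => Or.inl h

lemma glue_rel (r : Setoid α) (a b : α) : glue r a b a b :=
  Or.inr (Or.inl ⟨r.refl a, r.refl b⟩)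

lemma card_quotient_eq_card_of_le_bot {r : Setoid α} (h : r ≤ ⊥) :
    Nat.card (Quotient r) = Nat.card α := by
  rw [le_bot_iff.mp h, Nat.card_congr Setoid.quotientBotEquiv]

variable [Finite α]

lemma card_quotient_le_of_le {r s : Setoid α} (h : r ≤ s) :
    Nat.card (Quotient s) ≤ Nat.card (Quotient r) :=
  Nat.card_le_card_of_surjective (Setoid.map_of_le h) (Quotient.ind fun x => ⟨⟦x⟧, rfl⟩)

lemma card_quotient_lt_of_le {r s : Setoid α} (h : r ≤ s) {a b : α} (hs : s a b)
    (hr : ¬ r a b) : Nat.card (Quotient s) < Nat.card (Quotient r) := by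
  have := Fintype.ofFinite (Quotient r)
  have := Fintype.ofFinite (Quotient s)
  simp only [Nat.card_eq_fintype_card]
  refine Fintype.card_lt_of_surjective_not_injective (Setoid.map_of_le h)
    (Quotient.ind fun x => ⟨⟦x⟧, rfl⟩) fun hinj => hr ?_
  exact Quotient.exact (hinj (Quotient.sound hs : (⟦a⟧ : Quotient s) = ⟦b⟧))

lemma card_quotient_le_card_quotient_glue_add_one (r : Setoid α) (a b : α) :
    Nat.card (Quotient r) ≤ Nat.card (Quotient (glue r a b)) + 1 := by
  classical
  -- Away from the class of `b`, the projection to the glued quotient is injective.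
  let f : Quotient r → Option (Quotient (glue r a b)) := fun q =>
    if q = ⟦b⟧ then none else some (Setoid.map_of_le (le_glue r a b) q)
  have hf : f.Injective := by
    refine Quotient.ind fun x => Quotient.ind fun y hxy => ?_
    by_cases hx : (⟦x⟧ : Quotient r) = ⟦b⟧ <;> by_cases hy : (⟦y⟧ : Quotient r) = ⟦b⟧
    · exact hx.trans hy.symm
    · simp [f, hx, hy] at hxy
    · simp [f, hx, hy] at hxy
    · simp only [f, hx, hy, if_false, Option.some_inj] at hxy
      rcases Quotient.exact hxy with h | ⟨-, h⟩ | ⟨h, -⟩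
      · exact Quotient.sound h
      · exact absurd (Quotient.sound (r.symm h)) hy
      · exact absurd (Quotient.sound h) hx
  simpa [Finite.card_option] using Nat.card_le_card_of_injective f hf

end Setoid

section Perm

lemma rel_apply_of_mem_closure {S : Set (Perm α)} {s : Setoid α}
    (hS : ∀ g ∈ S, ∀ x, s (g x) x) {g : Perm α} (hg : g ∈ closure S) (x : α) : s (g x) x := by
  induction hg using closure_induction generalizing x with
  | mem g hg => exact hS g hg x
  | one => exact s.refl x
  | mul g h _ _ hg hh => exact s.trans (hg (h x)) (hh x)
  | inv g _ hg => simpa using s.symm (hg (g⁻¹ x))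

lemma orbitRel_apply_iff {G : Subgroup (Perm α)} {x y : α} :
    orbitRel G α x y ↔ ∃ g ∈ G, g y = x := by
  simp [orbitRel_apply, mem_orbit_iff]

lemma orbitRel_closure_le {S : Set (Perm α)} {s : Setoid α} (hS : ∀ g ∈ S, ∀ x, s (g x) x) :
    orbitRel (closure S) α ≤ s := by
  intro x y hxy
  obtain ⟨g, hg, rfl⟩ := orbitRel_apply_iff.mp hxy
  exact rel_apply_of_mem_closure hS hg y

lemma orbitRel_mono {G H : Subgroup (Perm α)} (h : G ≤ H) : orbitRel G α ≤ orbitRel H α := by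
  intro x y hxy
  obtain ⟨g, hg, rfl⟩ := orbitRel_apply_iff.mp hxy
  exact orbitRel_apply_iff.mpr ⟨g, h hg, rfl⟩

lemma sameCycle_setoid_le {π : Perm α} {s : Setoid α} (hπ : ∀ x, s (π x) x) :
    SameCycle.setoid π ≤ s := by
  rintro x _ ⟨i, rfl⟩
  have hS : ∀ g ∈ ({π} : Set (Perm α)), ∀ x, s (g x) x := by simpa using hπ
  exact s.symm (rel_apply_of_mem_closure hS (zpow_mem (subset_closure (Set.mem_singleton π)) i) x)

lemma sameCycle_setoid_le_orbitRel {G : Subgroup (Perm α)} {π : Perm α} (hπ : π ∈ G) :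
    SameCycle.setoid π ≤ orbitRel G α :=
  sameCycle_setoid_le fun _ => orbitRel_apply_iff.mpr ⟨π, hπ, rfl⟩

variable [DecidableEq α]

lemma rel_swap_apply {s : Setoid α} {a b : α} (h : s a b) (x : α) : s (swap a b x) x := by
  rcases eq_or_ne x a with rfl | hxa
  · rw [swap_apply_left]; exact s.symm h
  rcases eq_or_ne x b with rfl | hxb
  · rw [swap_apply_right]; exact h
  rw [swap_apply_of_ne_of_ne hxa hxb]

lemma sameCycle_swap_mul_of_not_sameCycle [Finite α] {π : Perm α} {a b : α}
    (h : ¬ π.SameCycle a b) : (swap a b * π).SameCycle a b := by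
  set p := Function.minimalPeriod π a
  have hp : 0 < p := Function.minimalPeriod_pos_of_mem_periodicPts
    (π.injective.mem_periodicPts a)
  -- Before returning to `a`, the orbit of `π` never meets `{a, b}`, so `swap a b` does not act.
  have agree : ∀ k < p, (swap a b * π)^[k] a = π^[k] a := by
    intro k
    induction k with
    | zero => intro; rfl
    | succ k ih =>
      intro hk
      rw [Function.iterate_succ_apply', ih (by omega), Perm.mul_apply,
        ← Function.iterate_succ_apply' π]
      refine swap_apply_of_ne_of_ne ?_ fun hb => h ⟨(k + 1 : ℕ), ?_⟩
      · exact Function.not_isPeriodicPt_of_pos_of_lt_minimalPeriod (Nat.succ_ne_zero k) hk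
      · rw [← hb, zpow_natCast, iterate_eq_pow]
  obtain ⟨k, hk⟩ : ∃ k, p = k + 1 := Nat.exists_eq_add_one.mpr hp
  refine ⟨p, ?_⟩
  rw [zpow_natCast, ← iterate_eq_pow, hk, Function.iterate_succ_apply', agree k (by omega),
    Perm.mul_apply, ← Function.iterate_succ_apply' π, Nat.succ_eq_add_one, ← hk,
    Function.iterate_minimalPeriod, swap_apply_left]

end Perm

section Count

/-- The number of cycles of `π`, fixed points counted as cycles of length one. -/
noncomputable def numCycles (π : Perm α) : ℕ := Nat.card (Quotient (SameCycle.setoid π))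

noncomputable def numOrbits (G : Subgroup (Perm α)) : ℕ := Nat.card (orbitRel.Quotient G α)

lemma numCycles_one : numCycles (1 : Perm α) = Nat.card α :=
  card_quotient_eq_card_of_le_bot fun _ _ h => sameCycle_one.mp h

lemma numOrbits_bot : numOrbits (⊥ : Subgroup (Perm α)) = Nat.card α := by
  refine card_quotient_eq_card_of_le_bot fun x y hxy => ?_
  obtain ⟨g, hg, rfl⟩ := orbitRel_apply_iff.mp hxy
  rw [mem_bot.mp hg, Perm.one_apply]

lemma numOrbits_le_one [Finite α] {G : Subgroup (Perm α)} (hG : ∀ a b : α, ∃ g ∈ G, g a = b) :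
    numOrbits G ≤ 1 := by
  refine Finite.card_le_one_iff_subsingleton.mpr ⟨Quotient.ind₂ fun x y => Quotient.sound ?_⟩
  exact orbitRel_apply_iff.mpr (hG y x)

variable [Finite α] [DecidableEq α]

lemma numCycles_swap_mul_le (π : Perm α) (a b : α) :
    numCycles (swap a b * π) ≤ numCycles π + 1 := by
  set ρ := swap a b * π
  have hπ : π = swap a b * ρ := by rw [← mul_assoc, swap_mul_self, one_mul]
  have hle : SameCycle.setoid π ≤ glue (SameCycle.setoid ρ) a b := by
    refine sameCycle_setoid_le fun x => ?_
    rw [hπ, Perm.mul_apply]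
    exact (glue _ a b).trans (rel_swap_apply (glue_rel _ a b) (ρ x))
      (le_glue _ a b (sameCycle_apply_left.mpr (SameCycle.refl ρ x)))
  exact (card_quotient_le_card_quotient_glue_add_one _ a b).trans
    (Nat.add_le_add_right (card_quotient_le_of_le hle) 1)

lemma numCycles_swap_mul_lt {π : Perm α} {a b : α} (h : ¬ π.SameCycle a b) :
    numCycles (swap a b * π) < numCycles π := by
  set ρ := swap a b * π
  have hab : ρ.SameCycle a b := sameCycle_swap_mul_of_not_sameCycle h
  have hle : SameCycle.setoid π ≤ SameCycle.setoid ρ :=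
    sameCycle_setoid_le fun x => (SameCycle.setoid ρ).trans
      (rel_swap_apply (s := SameCycle.setoid ρ) hab (π x)).symm
      (sameCycle_apply_left.mpr (SameCycle.refl ρ x))
  exact card_quotient_lt_of_le hle hab h

lemma numOrbits_closure_le_closure_insert_swap_add_one (S : Set (Perm α)) (a b : α) :
    numOrbits (closure S) ≤ numOrbits (closure (insert (swap a b) S)) + 1 := by
  have hle : orbitRel (closure (insert (swap a b) S)) α ≤ glue (orbitRel (closure S) α) a b := by
    refine orbitRel_closure_le ?_
    rintro g (rfl | hg) x
    · exact rel_swap_apply (glue_rel _ a b) x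
    · exact le_glue _ a b (orbitRel_apply_iff.mpr ⟨g, subset_closure hg, rfl⟩)
  exact (card_quotient_le_card_quotient_glue_add_one _ a b).trans
    (Nat.add_le_add_right (card_quotient_le_of_le hle) 1)

lemma numOrbits_closure_insert_swap {S : Set (Perm α)} {a b : α}
    (h : orbitRel (closure S) α a b) :
    numOrbits (closure (insert (swap a b) S)) = numOrbits (closure S) := by
  refine le_antisymm (card_quotient_le_of_le (orbitRel_mono (closure_mono ?_)))
    (card_quotient_le_of_le (orbitRel_closure_le ?_))
  · exact Set.subset_insert _ _
  · rintro g (rfl | hg) x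
    · exact rel_swap_apply h x
    · exact orbitRel_apply_iff.mpr ⟨g, subset_closure hg, rfl⟩

/-- A transposition `(a b)` that joins two orbits of the group generated by the later factors
joins two cycles of their product; otherwise the orbits stay put and the cycle count grows by at
most one. -/
lemma card_add_numCycles_prod_le (L : List (Perm α)) (hL : ∀ τ ∈ L, τ.IsSwap) :
    Nat.card α + numCycles L.prod ≤ L.length + 2 * numOrbits (closure {τ | τ ∈ L}) := by
  induction L with
  | nil => simp [numCycles_one, numOrbits_bot, two_mul]
  | cons τ L ih =>
    obtain ⟨a, b, -, rfl⟩ := hL τ List.mem_cons_self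
    have ih := ih fun τ hτ => hL τ (List.mem_cons_of_mem _ hτ)
    have hset : {τ | τ ∈ swap a b :: L} = insert (swap a b) {τ | τ ∈ L} := by
      ext; simp
    rw [hset, List.prod_cons, List.length_cons]
    by_cases hab : orbitRel (closure {τ | τ ∈ L}) α a b
    · have := numCycles_swap_mul_le L.prod a b
      rw [numOrbits_closure_insert_swap hab]
      omega
    · have := numCycles_swap_mul_lt fun h =>
        hab (sameCycle_setoid_le_orbitRel (list_prod_mem fun τ hτ => subset_closure hτ) h)
      have := numOrbits_closure_le_closure_insert_swap_add_one {τ | τ ∈ L} a b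
      omega

end Count

end TranspositionFactorization

open TranspositionFactorization

theorem stmt15_general {X : Type*} [Fintype X] [DecidableEq X]
    (n : ℕ) (σ : Fin n → Equiv.Perm X)
    (hswap : ∀ i, (σ i).IsSwap)
    (hprod : (List.ofFn σ).prod = 1)
    (htrans : ∀ a b : X, ∃ g ∈ Subgroup.closure (Set.range σ), g a = b) :
    Even n ∧ 2 * (Fintype.card X - 1) ≤ n := by
  have hswapL : ∀ τ ∈ List.ofFn σ, τ.IsSwap := by
    simpa [List.mem_ofFn] using hswap
  constructor
  · have hsign := sign_prod_list_swap hswapL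
    rw [hprod, map_one, List.length_ofFn] at hsign
    exact (neg_one_pow_eq_one_iff_even (by decide)).mp hsign.symm
  · have hkey := card_add_numCycles_prod_le (List.ofFn σ) hswapL
    have hrange : {τ | τ ∈ List.ofFn σ} = Set.range σ := by ext; simp [List.mem_ofFn]
    rw [hprod, numCycles_one, hrange, List.length_ofFn, Nat.card_eq_fintype_card] at hkey
    have := numOrbits_le_one htrans
    omega

/-- If transpositions `σ₁, …, σₙ` on a finite set `X` with
`|X| ≥ 2` have product the identity and generate a subgroup acting transitively
on `X`, then `n` is even and `n ≥ 2(|X| - 1)`. -/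
theorem stmt15 {X : Type*} [Fintype X] [DecidableEq X]
    (hX : 2 ≤ Fintype.card X)
    (n : ℕ) (σ : Fin n → Equiv.Perm X)
    (hswap : ∀ i, (σ i).IsSwap)
    (hprod : (List.ofFn σ).prod = 1)
    (htrans : ∀ a b : X, ∃ g ∈ Subgroup.closure (Set.range σ), g a = b) :
    Even n ∧ 2 * (Fintype.card X - 1) ≤ n :=
  stmt15_general n σ hswap hprod htrans
end
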